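/- Let t ∈ ℝ, p ∈ [0,1], and let E₀ = √p·I₂, E₁ = √(1−p)·σ_z be the Phase Flip Kraus operators. Set M_k := U_qs(t)† · (E_k ⊗ I₄) for k = 0,1, where ⊗ is the Kronecker product and I₄ the 4×4 identity (noise acting on the first of the three qubits). Then the average fidelity F_avg := (1/(8·9))·(tr(M₀†M₀ + M₁†M₁) + |tr M₀|² + |tr M₁|²) equals (1/18)·(p·(cos(t) + 3)² + 2). -/

import Mathlib

open Matrix Complex

/-- The Hamiltonian of the quantum qubit switch: the 8×8 complex matrix whose only
nonzero entries are `(H_qs)_{3,5} = (H_qs)_{5,3} = 1`. -/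
noncomputable def Hqs : Matrix (Fin 8) (Fin 8) ℂ :=
  Matrix.of fun i j =>
    if (i = 3 ∧ j = 5) ∨ (i = 5 ∧ j = 3) then 1 else 0

/-- The time-evolution operator `U_qs(t) = exp(−i t H_qs)` (matrix exponential). -/
noncomputable def Uqs (t : ℝ) : Matrix (Fin 8) (Fin 8) ℂ :=
  NormedSpace.exp ((-(Complex.I * (t : ℂ))) • Hqs)

/-- Kronecker product `E ⊗ I₄` of a one-qubit operator E with the identity on the
remaining two qubits: entry (4a+r, 4b+c) is `E a b · δ_{r c}`. -/
noncomputable def kronI4 (E : Matrix (Fin 2) (Fin 2) ℂ) : Matrix (Fin 8) (Fin 8) ℂ :=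
  Matrix.of fun r c =>
    E ⟨r.val / 4, by omega⟩ ⟨c.val / 4, by omega⟩ *
      (if r.val % 4 = c.val % 4 then 1 else 0)

/-- The Pauli Z matrix. -/
def σz : Matrix (Fin 2) (Fin 2) ℂ := !![1, 0; 0, -1]

/-- First Kraus operator of the Phase Flip channel. -/
noncomputable def E₀PF (p : ℝ) : Matrix (Fin 2) (Fin 2) ℂ :=
  ((Real.sqrt p : ℝ) : ℂ) • (1 : Matrix (Fin 2) (Fin 2) ℂ)

/-- Second Kraus operator of the Phase Flip channel. -/
noncomputable def E₁PF (p : ℝ) : Matrix (Fin 2) (Fin 2) ℂ :=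
  ((Real.sqrt (1 - p) : ℝ) : ℂ) • σz

/-!
Since `H_qs³ = H_qs`, the exponential series collapses to
`U_qs(t) = 1 + (cos t - 1) H_qs² - i sin t H_qs`; hence `tr U_qs(t) = 6 + 2 cos t`, while
`tr (U_qs(t) (σ_z ⊗ I₄)) = 0` because `H_qs` only couples `|011⟩` and `|101⟩`, on which `σ_z ⊗ I₄`
has opposite signs. As `U_qs(t)` is unitary and `E₀†E₀ + E₁†E₁ = 1`, the Kraus sum `Σ M_k†M_k`
is the identity, of trace 8.
-/

section Tripotent

variable {M : Type*} [Monoid M] {x : M}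

theorem pow_two_mul_add_one_of_pow_three_eq_self (hx : x ^ 3 = x) (n : ℕ) :
    x ^ (2 * n + 1) = x := by
  induction n with
  | zero => simp
  | succ n ih => rw [show 2 * (n + 1) + 1 = 2 * n + 1 + 2 by ring, pow_add, ih, ← pow_succ', hx]

theorem pow_two_mul_add_two_of_pow_three_eq_self (hx : x ^ 3 = x) (n : ℕ) :
    x ^ (2 * n + 2) = x ^ 2 := by
  rw [pow_succ, pow_two_mul_add_one_of_pow_three_eq_self hx, sq]

end Tripotent

theorem NormedSpace.exp_smul_of_pow_three_eq_self {A : Type*} [Ring A] [Algebra ℂ A]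
    [TopologicalSpace A] [IsTopologicalRing A] [ContinuousSMul ℂ A] [T2Space A] {x : A}
    (hx : x ^ 3 = x) (z : ℂ) :
    exp (z • x) = 1 + (Complex.cosh z - 1) • x ^ 2 + Complex.sinh z • x := by
  rw [exp_eq_tsum ℂ]
  refine HasSum.tsum_eq ?_
  -- the `n = 0` term is `1` rather than `x ^ 2`
  have heven : HasSum (fun n => ((2 * n).factorial⁻¹ : ℂ) • (z • x) ^ (2 * n))
      (Complex.cosh z • x ^ 2 + (1 - x ^ 2)) := by
    refine ((Complex.hasSum_cosh z).smul_const (x ^ 2)).add (hasSum_ite_eq 0 (1 - x ^ 2))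
      |>.congr_fun ?_
    rintro (_ | n)
    · simp only [mul_zero, pow_zero, Nat.factorial_zero, Nat.cast_one, inv_one, div_one, one_smul,
        if_true, add_sub_cancel]
    · rw [smul_pow, smul_smul, mul_add_one, pow_two_mul_add_two_of_pow_three_eq_self hx,
        if_neg n.succ_ne_zero, add_zero, div_eq_inv_mul]
  have hodd : HasSum (fun n => ((2 * n + 1).factorial⁻¹ : ℂ) • (z • x) ^ (2 * n + 1))
      (Complex.sinh z • x) := by
    refine (Complex.hasSum_sinh z).smul_const x |>.congr_fun fun n => ?_
    rw [smul_pow, smul_smul, pow_two_mul_add_one_of_pow_three_eq_self hx, div_eq_inv_mul]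
  rw [show 1 + (Complex.cosh z - 1) • x ^ 2 + Complex.sinh z • x
      = Complex.cosh z • x ^ 2 + (1 - x ^ 2) + Complex.sinh z • x by rw [sub_smul, one_smul]; abel]
  exact HasSum.even_add_odd (f := fun n => (n.factorial⁻¹ : ℂ) • (z • x) ^ n) heven hodd

theorem conjTranspose_mul_self_conjTranspose_mul {n α : Type*} [Fintype n] [DecidableEq n]
    [CommSemiring α] [StarRing α] {V : Matrix n n α} (hV : V * Vᴴ = 1) (K : Matrix n n α) :
    (Vᴴ * K)ᴴ * (Vᴴ * K) = Kᴴ * K := by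
  rw [conjTranspose_mul, conjTranspose_conjTranspose, Matrix.mul_assoc, ← Matrix.mul_assoc V, hV,
    Matrix.one_mul]

open scoped Kronecker

theorem Hqs_eq_single_add_single : Hqs = single 3 5 1 + single 5 3 1 := by
  ext i j
  simp only [Hqs, of_apply, Matrix.add_apply, single_apply]
  split_ifs <;> grind

theorem Hqs_sq : Hqs ^ 2 = single 3 3 1 + single 5 5 1 := by
  simp [sq, Hqs_eq_single_add_single, add_mul, mul_add, add_comm]

theorem Hqs_pow_three : Hqs ^ 3 = Hqs := by
  rw [pow_succ, Hqs_sq, Hqs_eq_single_add_single]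
  simp [add_mul, mul_add]

theorem trace_Hqs : Hqs.trace = 0 := by
  simp [Hqs_eq_single_add_single, trace_single_eq_of_ne]

theorem trace_Hqs_sq : (Hqs ^ 2).trace = 2 := by
  rw [Hqs_sq, trace_add, trace_single_eq_same, trace_single_eq_same]
  norm_num

theorem Hqs_conjTranspose : Hqsᴴ = Hqs := by
  simp [Hqs_eq_single_add_single, conjTranspose_single, add_comm]

theorem kronI4_eq_submatrix_kronecker (E : Matrix (Fin 2) (Fin 2) ℂ) :
    kronI4 E = (E ⊗ₖ (1 : Matrix (Fin 4) (Fin 4) ℂ)).submatrix finProdFinEquiv.symm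
      finProdFinEquiv.symm := by
  ext i j
  simp only [kronI4, of_apply, submatrix_apply, kronecker_apply, finProdFinEquiv_symm_apply,
    one_apply, Fin.ext_iff, Fin.coe_modNat]
  rfl

theorem kronI4_mul (E F : Matrix (Fin 2) (Fin 2) ℂ) : kronI4 (E * F) = kronI4 E * kronI4 F := by
  simp only [kronI4_eq_submatrix_kronecker, submatrix_mul_equiv, ← mul_kronecker_mul, mul_one]

theorem kronI4_conjTranspose (E : Matrix (Fin 2) (Fin 2) ℂ) : kronI4 Eᴴ = (kronI4 E)ᴴ := by
  simp only [kronI4_eq_submatrix_kronecker, conjTranspose_submatrix, conjTranspose_kronecker,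
    conjTranspose_one]

theorem kronI4_add (E F : Matrix (Fin 2) (Fin 2) ℂ) : kronI4 (E + F) = kronI4 E + kronI4 F := by
  ext i j
  simp only [kronI4, of_apply, Matrix.add_apply, add_mul]

theorem kronI4_smul (c : ℂ) (E : Matrix (Fin 2) (Fin 2) ℂ) : kronI4 (c • E) = c • kronI4 E := by
  ext i j
  simp only [kronI4, of_apply, Matrix.smul_apply, smul_eq_mul, mul_assoc]

theorem kronI4_one : kronI4 1 = 1 := by
  simp only [kronI4_eq_submatrix_kronecker, one_kronecker_one, submatrix_one_equiv]

theorem trace_kronI4 (E : Matrix (Fin 2) (Fin 2) ℂ) : (kronI4 E).trace = 4 * E.trace :=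
  calc (kronI4 E).trace = (E ⊗ₖ (1 : Matrix (Fin 4) (Fin 4) ℂ)).trace := by
        rw [kronI4_eq_submatrix_kronecker]
        exact finProdFinEquiv.symm.sum_comp fun k => (E ⊗ₖ (1 : Matrix (Fin 4) (Fin 4) ℂ)) k k
    _ = 4 * E.trace := by
        rw [trace_kronecker, trace_one, Fintype.card_fin, mul_comm]
        norm_num

theorem trace_σz : σz.trace = 0 := by
  simp [σz, trace_fin_two]

theorem Uqs_eq (t : ℝ) :
    Uqs t = 1 + ((Real.cos t : ℂ) - 1) • Hqs ^ 2 - (I * Real.sin t) • Hqs := by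
  have hcosh : Complex.cosh (-(I * t)) = Real.cos t := by
    rw [Complex.cosh_neg, mul_comm, Complex.cosh_mul_I, Complex.ofReal_cos]
  have hsinh : Complex.sinh (-(I * t)) = -(I * Real.sin t) := by
    rw [Complex.sinh_neg, mul_comm, Complex.sinh_mul_I, Complex.ofReal_sin, mul_comm]
  rw [Uqs, NormedSpace.exp_smul_of_pow_three_eq_self Hqs_pow_three, hcosh, hsinh, neg_smul,
    ← sub_eq_add_neg]

theorem Uqs_conjTranspose (t : ℝ) : (Uqs t)ᴴ = Uqs (-t) := by
  rw [Uqs, Uqs, ← Matrix.exp_conjTranspose, conjTranspose_smul, Hqs_conjTranspose]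
  congr 2
  simp

theorem Uqs_add (s t : ℝ) : Uqs (s + t) = Uqs s * Uqs t := by
  rw [Uqs, Uqs, Uqs,
    ← Matrix.exp_add_of_commute _ _ (((Commute.refl Hqs).smul_left _).smul_right _), ← add_smul]
  push_cast
  ring_nf

theorem Uqs_mul_Uqs_neg (t : ℝ) : Uqs t * Uqs (-t) = 1 := by
  rw [← Uqs_add, add_neg_cancel, Uqs]
  simp

theorem trace_Uqs (t : ℝ) : (Uqs t).trace = 6 + 2 * Real.cos t := by
  rw [Uqs_eq, trace_sub, trace_add, trace_smul, trace_smul, trace_one, trace_Hqs_sq, trace_Hqs,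
    Fintype.card_fin, smul_eq_mul, smul_zero]
  push_cast
  ring

theorem trace_Uqs_mul_kronI4_σz (t : ℝ) : (Uqs t * kronI4 σz).trace = 0 := by
  rw [Uqs_eq, Hqs_sq, Hqs_eq_single_add_single]
  simp only [add_mul, sub_mul, one_mul, smul_mul, trace_add, trace_sub, trace_smul,
    trace_single_mul, trace_kronI4, trace_σz]
  simp [kronI4, σz]

theorem σz_conjTranspose_mul_self : σzᴴ * σz = 1 := by
  ext i j
  fin_cases i <;> fin_cases j <;> simp [σz, Matrix.mul_apply]

theorem phaseFlip_kraus_completeness {p : ℝ} (hp₀ : 0 ≤ p) (hp₁ : p ≤ 1) :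
    (E₀PF p)ᴴ * E₀PF p + (E₁PF p)ᴴ * E₁PF p = 1 := by
  simp only [E₀PF, E₁PF, conjTranspose_smul, conjTranspose_one, smul_mul_smul, Matrix.one_mul,
    σz_conjTranspose_mul_self, ← add_smul, Complex.star_def, Complex.conj_ofReal,
    ← Complex.ofReal_mul, Real.mul_self_sqrt hp₀, Real.mul_self_sqrt (sub_nonneg.mpr hp₁)]
  simp

/-- Average fidelity of the quantum switch under Phase Flip noise on the first qubit:
F_avg = (1/18)·(p·(cos t + 3)² + 2). -/
theorem average_fidelity_phase_flip (t : ℝ) (p : ℝ) (hp₀ : 0 ≤ p) (hp₁ : p ≤ 1) :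
    (1 / (8 * 9) : ℂ) *
      ((((Uqs t)ᴴ * kronI4 (E₀PF p))ᴴ * ((Uqs t)ᴴ * kronI4 (E₀PF p))
        + ((Uqs t)ᴴ * kronI4 (E₁PF p))ᴴ * ((Uqs t)ᴴ * kronI4 (E₁PF p))).trace
      + ((‖((Uqs t)ᴴ * kronI4 (E₀PF p)).trace‖ ^ 2 : ℝ) : ℂ)
      + ((‖((Uqs t)ᴴ * kronI4 (E₁PF p)).trace‖ ^ 2 : ℝ) : ℂ)) =
    ((1 / 18 * (p * (Real.cos t + 3) ^ 2 + 2) : ℝ) : ℂ) := by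
  have hU : Uqs t * (Uqs t)ᴴ = 1 := by rw [Uqs_conjTranspose, Uqs_mul_Uqs_neg]
  have hsum : ((Uqs t)ᴴ * kronI4 (E₀PF p))ᴴ * ((Uqs t)ᴴ * kronI4 (E₀PF p))
      + ((Uqs t)ᴴ * kronI4 (E₁PF p))ᴴ * ((Uqs t)ᴴ * kronI4 (E₁PF p)) = 1 := by
    rw [conjTranspose_mul_self_conjTranspose_mul hU, conjTranspose_mul_self_conjTranspose_mul hU,
      ← kronI4_conjTranspose, ← kronI4_conjTranspose, ← kronI4_mul, ← kronI4_mul, ← kronI4_add,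
      phaseFlip_kraus_completeness hp₀ hp₁, kronI4_one]
  have htr₀ : ((Uqs t)ᴴ * kronI4 (E₀PF p)).trace = ((√p * (6 + 2 * Real.cos t) : ℝ) : ℂ) := by
    rw [Uqs_conjTranspose, E₀PF, kronI4_smul, kronI4_one, Matrix.mul_smul, Matrix.mul_one,
      trace_smul, trace_Uqs, Real.cos_neg, smul_eq_mul]
    push_cast
    ring
  have htr₁ : ((Uqs t)ᴴ * kronI4 (E₁PF p)).trace = 0 := by
    rw [Uqs_conjTranspose, E₁PF, kronI4_smul, Matrix.mul_smul, trace_smul,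
      trace_Uqs_mul_kronI4_σz, smul_zero]
  rw [hsum, htr₀, htr₁, trace_one, Fintype.card_fin, norm_zero, Complex.norm_real,
    Real.norm_eq_abs, sq_abs, mul_pow, Real.sq_sqrt hp₀]
  push_cast
  ring
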